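/- Let n, n' ≥ 1, d = n + n', and w ∈ ℝ^d with wᵢ = −1/n for i ≤ n and wᵢ = 1/n' for i > n. If Π is a uniformly random d×d permutation matrix, then for any l > 0: P(wᵀΠw ≥ l·‖w‖₂²) ≤ 1 / ((d−1)·l²). -/

import Mathlib

/-!
Write `Q(π) = ∑ᵢ wᵢ w_{π i}` and `A = ∑ᵢ wᵢ²`. By Markov's inequality applied to `Q²`, it suffices
to show that the average of `Q(π)²` over all permutations is `A² / (d - 1)`. Expanding the square,
this average is `∑ᵢⱼ wᵢ wⱼ M(i, j)` with `M(i, j) = ∑_π w_{π i} w_{π j}`. Since the permutation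
group acts transitively on points and on ordered pairs of distinct points, `M` takes one value `a`
on the diagonal and one value `b` off it; `d a = d! A`, and `∑ⱼ wⱼ = 0` forces
`a + (d - 1) b = 0`, which gives the second moment `(a - b) A = d! A² / (d - 1)`.
-/

open Finset Equiv
open scoped Nat

namespace Equiv.Perm

variable {α : Type*} [DecidableEq α]

lemma exists_apply_eq_and_apply_eq {i j k m : α} (hij : i ≠ j) (hkm : k ≠ m) :
    ∃ σ : Perm α, σ i = k ∧ σ j = m := by
  refine ⟨swap (swap i k j) m * swap i k, ?_, by simp [Perm.mul_apply]⟩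
  have hj : swap i k j ≠ k := fun h => hij ((swap i k).injective (by simpa using h)).symm
  simp only [Perm.mul_apply, swap_apply_left]
  exact swap_apply_of_ne_of_ne hj.symm hkm

variable [Fintype α] {M : Type*} [AddCommMonoid M]

lemma sum_apply_eq_sum_apply (g : α → M) (i k : α) :
    ∑ π : Perm α, g (π i) = ∑ π : Perm α, g (π k) :=
  Fintype.sum_equiv (Equiv.mulRight (swap i k)) _ _ fun π => by simp [Perm.mul_apply]

lemma sum_apply_apply_eq_sum_apply_apply (g : α → α → M) {i j k m : α} (hij : i ≠ j)
    (hkm : k ≠ m) : ∑ π : Perm α, g (π i) (π j) = ∑ π : Perm α, g (π k) (π m) := by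
  obtain ⟨σ, hσk, hσm⟩ := exists_apply_eq_and_apply_eq hkm hij
  exact Fintype.sum_equiv (Equiv.mulRight σ) _ _ fun π => by simp [Perm.mul_apply, hσk, hσm]

lemma card_nsmul_sum_apply (g : α → M) (i : α) :
    Fintype.card α • ∑ π : Perm α, g (π i) = (Fintype.card α)! • ∑ k, g k := by
  calc Fintype.card α • ∑ π : Perm α, g (π i) = ∑ k : α, ∑ π : Perm α, g (π k) := by
        simp [sum_apply_eq_sum_apply g _ i]
    _ = ∑ π : Perm α, ∑ k, g (π k) := sum_comm
    _ = ∑ π : Perm α, ∑ k, g k := sum_congr rfl fun π _ => Equiv.sum_comp π g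
    _ = (Fintype.card α)! • ∑ k, g k := by simp [Fintype.card_perm]

end Equiv.Perm

section SecondMoment

variable {α R : Type*} [Fintype α] [DecidableEq α] [CommRing R]

theorem sum_perm_sq_sum_mul_apply (w : α → R) :
    ∑ π : Perm α, (∑ i, w i * w (π i)) ^ 2
      = ∑ i, w i * ∑ j, w j * ∑ π : Perm α, w (π i) * w (π j) :=
  calc ∑ π : Perm α, (∑ i, w i * w (π i)) ^ 2
      = ∑ π : Perm α, ∑ i, ∑ j, w i * (w j * (w (π i) * w (π j))) := by
        simp only [sq, sum_mul_sum]
        refine sum_congr rfl fun π _ => sum_congr rfl fun i _ => sum_congr rfl fun j _ => ?_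
        ring
    _ = ∑ i, ∑ j, ∑ π : Perm α, w i * (w j * (w (π i) * w (π j))) := by
        rw [sum_comm]
        exact sum_congr rfl fun i _ => sum_comm
    _ = ∑ i, w i * ∑ j, w j * ∑ π : Perm α, w (π i) * w (π j) := by simp only [mul_sum]

variable [Nontrivial α]

theorem sub_one_mul_sum_perm_sq_sum_mul_apply (w : α → R) (hw : ∑ i, w i = 0) :
    ((Fintype.card α : R) - 1) * ∑ π : Perm α, (∑ i, w i * w (π i)) ^ 2
      = (Fintype.card α)! * (∑ i, w i ^ 2) ^ 2 := by
  obtain ⟨i₀, j₀, hij₀⟩ := exists_pair_ne α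
  set M : α → α → R := fun i j => ∑ π : Perm α, w (π i) * w (π j) with hM_def
  set a := M i₀ i₀
  set b := M i₀ j₀
  have hM : ∀ i j, M i j = b + if i = j then a - b else 0 := by
    intro i j
    split_ifs with h
    · subst h
      simpa using Perm.sum_apply_eq_sum_apply (fun x => w x * w x) i i₀
    · simpa using Perm.sum_apply_apply_eq_sum_apply_apply (fun x y => w x * w y) h hij₀
  have hdiag : (Fintype.card α : R) * a = (Fintype.card α)! * ∑ i, w i ^ 2 := by
    simpa [sq, nsmul_eq_mul] using Perm.card_nsmul_sum_apply (fun x => w x * w x) i₀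
  have hrow : a + ((Fintype.card α : R) - 1) * b = 0 := by
    have hzero : ∑ j, M i₀ j = 0 := by
      simp only [hM_def, ← mul_sum, Finset.sum_comm (γ := α), Equiv.sum_comp, hw, mul_zero,
        sum_const_zero]
    simp only [hM, sum_add_distrib, sum_ite_eq, mem_univ, if_true, sum_const, Finset.card_univ,
      nsmul_eq_mul] at hzero
    linear_combination hzero
  have hsecond : ∑ π : Perm α, (∑ i, w i * w (π i)) ^ 2 = (a - b) * ∑ i, w i ^ 2 := by
    rw [sum_perm_sq_sum_mul_apply]
    change ∑ i, w i * ∑ j, w j * M i j = _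
    simp only [hM, mul_add, sum_add_distrib, ← sum_mul, hw, zero_mul, zero_add,
      mul_ite, mul_zero, sum_ite_eq, mem_univ, if_true, mul_sum]
    exact sum_congr rfl fun i _ => by ring
  rw [hsecond]
  linear_combination (∑ i, w i ^ 2) * hdiag - (∑ i, w i ^ 2) * hrow

end SecondMoment

theorem Finset.card_filter_le_mul_sq_le_sum_sq {ι R : Type*} [Ring R] [LinearOrder R]
    [IsStrictOrderedRing R] (s : Finset ι) (f : ι → R) {t : R} (ht : 0 ≤ t) :
    #(s.filter fun x => t ≤ f x) * t ^ 2 ≤ ∑ x ∈ s, f x ^ 2 :=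
  calc (#(s.filter fun x => t ≤ f x) : R) * t ^ 2 = ∑ _x ∈ s.filter fun x => t ≤ f x, t ^ 2 := by
        rw [sum_const, nsmul_eq_mul]
    _ ≤ ∑ x ∈ s.filter fun x => t ≤ f x, f x ^ 2 :=
        sum_le_sum fun x hx => pow_le_pow_left₀ ht (mem_filter.mp hx).2 2
    _ ≤ ∑ x ∈ s, f x ^ 2 :=
        sum_le_sum_of_subset_of_nonneg (filter_subset _ _) fun x _ _ => sq_nonneg (f x)

theorem Fin.sum_univ_add_ite_lt {R : Type*} [Semiring R] (m k : ℕ) (a b : R) :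
    ∑ i : Fin (m + k), (if (i : ℕ) < m then a else b) = m * a + k * b := by
  simp [Fin.sum_univ_add]

/-- Let `d = n + n'` and `w ∈ ℝ^d` with `wᵢ = -1/n` for `i ≤ n` and `wᵢ = 1/n'`
otherwise. For a uniformly random permutation matrix `Π` and any `l > 0`,
`P(wᵀ Π w ≥ l ‖w‖₂²) ≤ 1 / ((d-1) l²)`. The probability is the fraction of
the `d!` permutations satisfying the inequality. -/
theorem permutation_quadratic_form_tail_bound
    (n n' : ℕ) (hn : 1 ≤ n) (hn' : 1 ≤ n') (l : ℝ) (hl : 0 < l) :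
    let d := n + n'
    let w : Fin d → ℝ := fun i => if (i : ℕ) < n then -1 / n else 1 / n'
    ((Finset.univ.filter
        (fun π : Equiv.Perm (Fin d) =>
          l * ∑ i, (w i) ^ 2 ≤ ∑ i, w i * w (π i))).card : ℝ) /
        (Nat.factorial d : ℝ) ≤
      1 / (((d : ℝ) - 1) * l ^ 2) := by
  intro d w
  have hd : (2 : ℝ) ≤ d := by simp only [d]; norm_cast; omega
  have : Nontrivial (Fin d) := Fin.nontrivial_iff_two_le.mpr (by omega)
  have hw : ∑ i, w i = 0 := by
    rw [Fin.sum_univ_add_ite_lt]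
    field_simp
    ring
  have hA : 0 < ∑ i, w i ^ 2 := by
    simp only [w]
    positivity
  have hmoment := sub_one_mul_sum_perm_sq_sum_mul_apply w hw
  have hmarkov := card_filter_le_mul_sq_le_sum_sq univ
    (fun π : Perm (Fin d) => ∑ i, w i * w (π i)) (by positivity : 0 ≤ l * ∑ i, w i ^ 2)
  rw [Fintype.card_fin] at hmoment
  rw [div_le_div_iff₀ (by positivity) (by nlinarith), one_mul]
  refine le_of_mul_le_mul_right ?_ (pow_pos hA 2)
  calc _ = ((d : ℝ) - 1) * (_ * (l * ∑ i, w i ^ 2) ^ 2) := by ring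
    _ ≤ ((d : ℝ) - 1) * ∑ π : Perm (Fin d), (∑ i, w i * w (π i)) ^ 2 :=
        mul_le_mul_of_nonneg_left hmarkov (by linarith)
    _ = _ := hmoment
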